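/- Let u, v : ℝ → ℝ be continuous and consider the planar SLAM system in matrix form on SE(2)^{N+1}: Ẋ = X Ω, Ṗ_i = P_i Ω_i (1 ≤ i ≤ N), where X(t), P_i(t) are 3×3 homogeneous matrices ((R_θ, x), (0,1)) and ((R_θ, p_i), (0,1)) and Ω = ((ω_x, u e₁), (0, 0)), Ω_i = ((ω_x, 0), (0, 0)) with ω_x = uv·J embedded as 2×2 block. Let L_X, L_i : (ℝ²)^N → ℝ^{3×3} be continuous gain functions, and suppose the observer matrices X̂, P̂_i (of the same homogeneous form, with entries θ̂, x̂, p̂_i) satisfy X̂' = X̂ Ω + L_X(Ỹ₁, …, Ỹ_N) X̂ and P̂_i' = P̂_i Ω_i + L_i(Ỹ₁, …, Ỹ_N) P̂_i, where Ỹ_i = R_{θ̂}(ẑ_i − z_i) with z_i = R_{−θ}(p_i − x), ẑ_i = R_{−θ̂}(p̂_i − x̂). Then the invariant state errors η_x = X̂ X^{−1}, η_i = P̂_i P_i^{−1} satisfy η_x' = L_X(Ỹ) η_x and η_i' = L_i(Ỹ) η_i, where each Ỹ_i is given by the first two components of (η_i − η_x) H with H = (0,0,1)ᵀ; hence the full error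 equation is autonomous, depending only on (η_x, η₁, …, η_N) and not on the trajectory or the inputs u, v. -/

import Mathlib

/-! Both the system and the observer are driven by right multiplication with the same `Ω`,
so in `η = X̂ X⁻¹` the terms `X̂ Ω X⁻¹` and `-X̂ X⁻¹ (X Ω) X⁻¹` cancel and only `L η` survives.
For the outputs, `ηᵢ` and `η_x` are `SE(2)` matrices with the same angle `θ̂ - θ`, with
translations `p̂ᵢ - R_{θ̂-θ} pᵢ` and `x̂ - R_{θ̂-θ} x`, so `(ηᵢ - η_x) H` is their difference,
which is `R_{θ̂} (ẑᵢ - zᵢ)`. -/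

open Real Matrix

attribute [local instance] Matrix.normedAddCommGroup Matrix.normedSpace

/-- The planar rotation matrix `R_θ`. -/
noncomputable def Rot (θ : ℝ) : Matrix (Fin 2) (Fin 2) ℝ :=
  !![Real.cos θ, -Real.sin θ; Real.sin θ, Real.cos θ]

/-- The homogeneous `SE(2)` matrix `((R_θ, x), (0_{1×2}, 1))`. -/
noncomputable def SE2mat (θ : ℝ) (x : Fin 2 → ℝ) : Matrix (Fin 3) (Fin 3) ℝ :=
  !![Real.cos θ, -Real.sin θ, x 0;
     Real.sin θ,  Real.cos θ, x 1;
     0,           0,          1]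

/-- The body velocity matrix `Ω = ((ω_x, u e₁), (0_{1×2}, 0))` with `ω_x = uv·J`. -/
def ΩmatX (u v : ℝ) : Matrix (Fin 3) (Fin 3) ℝ :=
  !![0,     -(u * v), u;
     u * v, 0,        0;
     0,     0,        0]

/-- The body velocity matrix `Ωᵢ = ((ω_x, 0), (0_{1×2}, 0))` for a fixed landmark. -/
def ΩmatP (u v : ℝ) : Matrix (Fin 3) (Fin 3) ℝ :=
  !![0,     -(u * v), 0;
     u * v, 0,        0;
     0,     0,        0]

section MatrixCalculus

variable {𝕜 n : Type*} [NontriviallyNormedField 𝕜] [Fintype n] [DecidableEq n]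

-- The `L∞` operator norm makes `Matrix n n 𝕜` a normed algebra whose topology is definitionally
-- that of the entrywise sup norm, so the normed-algebra calculus applies.
theorem HasDerivAt.matrix_mul {f g : 𝕜 → Matrix n n 𝕜} {f' g' : Matrix n n 𝕜} {t : 𝕜}
    (hf : HasDerivAt f f' t) (hg : HasDerivAt g g' t) :
    HasDerivAt (fun s => f s * g s) (f' * g t + f t * g') t :=
  let _ := Matrix.linftyOpNormedRing (n := n) (α := 𝕜)
  let _ := Matrix.linftyOpNormedAlgebra (n := n) (R := 𝕜) (α := 𝕜)
  hf.mul hg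

theorem HasDerivAt.matrix_inv [CompleteSpace 𝕜] {f : 𝕜 → Matrix n n 𝕜} {f' : Matrix n n 𝕜}
    {t : 𝕜} (hf : HasDerivAt f f' t) (h : IsUnit (f t)) :
    HasDerivAt (fun s => (f s)⁻¹) (-((f t)⁻¹ * f' * (f t)⁻¹)) t := by
  let _ := Matrix.linftyOpNormedRing (n := n) (α := 𝕜)
  let _ := Matrix.linftyOpNormedAlgebra (n := n) (R := 𝕜) (α := 𝕜)
  -- instance search only finds completeness for the sup-norm uniformity
  have : HasSummableGeomSeries (Matrix n n 𝕜) :=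
    @instHasSummableGeomSeriesOfCompleteSpace _ _ (FiniteDimensional.complete 𝕜 _)
  obtain ⟨u, hu⟩ := h
  have key := (hu ▸ hasFDerivAt_ringInverse (𝕜 := 𝕜) u).comp_hasDerivAt t hf
  simp only [_root_.neg_apply, ContinuousLinearMap.mulLeftRight_apply, Matrix.coe_units_inv,
    hu] at key
  rw [funext fun s => nonsing_inv_eq_ringInverse (f s)]
  exact key

theorem hasDerivAt_mul_inv_of_left_invariant [CompleteSpace 𝕜] {X Xhat : 𝕜 → Matrix n n 𝕜}
    {Ω L : Matrix n n 𝕜} {t : 𝕜} (hX : HasDerivAt X (X t * Ω) t)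
    (hXhat : HasDerivAt Xhat (Xhat t * Ω + L * Xhat t) t) (hunit : IsUnit (X t)) :
    HasDerivAt (fun s => Xhat s * (X s)⁻¹) (L * (Xhat t * (X t)⁻¹)) t := by
  have hinv : (X t)⁻¹ * X t = 1 := nonsing_inv_mul _ ((isUnit_iff_isUnit_det _).mp hunit)
  convert hXhat.matrix_mul (hX.matrix_inv hunit) using 1
  rw [mul_neg, ← mul_assoc (X t)⁻¹, hinv, one_mul]
  noncomm_ring

end MatrixCalculus

theorem Rot_add (a b : ℝ) : Rot (a + b) = Rot a * Rot b := by
  ext i j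
  fin_cases i <;> fin_cases j <;> simp [Rot, cos_add, sin_add] <;> ring

theorem Rot_zero : Rot 0 = 1 := by
  ext i j
  fin_cases i <;> fin_cases j <;> simp [Rot]

theorem SE2mat_mul (a b : ℝ) (x y : Fin 2 → ℝ) :
    SE2mat a x * SE2mat b y = SE2mat (a + b) (Rot a *ᵥ y + x) := by
  ext i j
  fin_cases i <;> fin_cases j <;>
    simp [SE2mat, Rot, Matrix.mul_apply, Fin.sum_univ_three, dotProduct, cos_add, sin_add] <;> ring

theorem SE2mat_zero : SE2mat 0 0 = 1 := by
  ext i j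
  fin_cases i <;> fin_cases j <;> simp [SE2mat]

theorem SE2mat_mul_SE2mat_neg (θ : ℝ) (x : Fin 2 → ℝ) :
    SE2mat θ x * SE2mat (-θ) (-(Rot (-θ) *ᵥ x)) = 1 := by
  rw [SE2mat_mul, add_neg_cancel, mulVec_neg, mulVec_mulVec, ← Rot_add, add_neg_cancel, Rot_zero,
    one_mulVec, neg_add_cancel, SE2mat_zero]

theorem SE2mat_inv (θ : ℝ) (x : Fin 2 → ℝ) :
    (SE2mat θ x)⁻¹ = SE2mat (-θ) (-(Rot (-θ) *ᵥ x)) :=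
  inv_eq_right_inv (SE2mat_mul_SE2mat_neg θ x)

theorem isUnit_SE2mat (θ : ℝ) (x : Fin 2 → ℝ) : IsUnit (SE2mat θ x) :=
  (isUnit_iff_isUnit_det _).mpr (isUnit_det_of_right_inverse (SE2mat_mul_SE2mat_neg θ x))

theorem SE2mat_mul_inv (a b : ℝ) (x y : Fin 2 → ℝ) :
    SE2mat a x * (SE2mat b y)⁻¹ = SE2mat (a - b) (x - Rot (a - b) *ᵥ y) := by
  rw [SE2mat_inv, SE2mat_mul, mulVec_neg, mulVec_mulVec, ← Rot_add, ← sub_eq_add_neg,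
    neg_add_eq_sub]

theorem SE2mat_sub_SE2mat_mulVec (θ : ℝ) (x y : Fin 2 → ℝ) :
    (SE2mat θ x - SE2mat θ y) *ᵥ ![0, 0, 1] = ![x 0 - y 0, x 1 - y 1, 0] := by
  ext i
  fin_cases i <;> simp [SE2mat, mulVec, dotProduct, Fin.sum_univ_three]

theorem Rot_mulVec_sub_Rot_neg_mulVec (a b : ℝ) (x y : Fin 2 → ℝ) :
    Rot a *ᵥ (Rot (-a) *ᵥ x - Rot (-b) *ᵥ y) = x - Rot (a - b) *ᵥ y := by
  rw [mulVec_sub, mulVec_mulVec, mulVec_mulVec, ← Rot_add, ← Rot_add, add_neg_cancel, Rot_zero,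
    one_mulVec, ← sub_eq_add_neg]

theorem slam_matrix_error_equation_autonomous_general
    {N : ℕ} (u v : ℝ → ℝ)
    (LX : (Fin N → Fin 2 → ℝ) → Matrix (Fin 3) (Fin 3) ℝ)
    (Li : Fin N → (Fin N → Fin 2 → ℝ) → Matrix (Fin 3) (Fin 3) ℝ)
    (x xhat : ℝ → Fin 2 → ℝ) (θ θhat : ℝ → ℝ)
    (p phat : Fin N → ℝ → Fin 2 → ℝ)
    (z zhat : Fin N → ℝ → Fin 2 → ℝ)
    (hz : ∀ i t, z i t = (Rot (-(θ t))).mulVec (p i t - x t))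
    (hzhat : ∀ i t, zhat i t = (Rot (-(θhat t))).mulVec (phat i t - xhat t))
    (Ytil : ℝ → Fin N → Fin 2 → ℝ)
    (hY : ∀ t i, Ytil t i = (Rot (θhat t)).mulVec (zhat i t - z i t))
    (X Xhat : ℝ → Matrix (Fin 3) (Fin 3) ℝ)
    (P Phat : Fin N → ℝ → Matrix (Fin 3) (Fin 3) ℝ)
    (hXdef : ∀ t, X t = SE2mat (θ t) (x t))
    (hXhatdef : ∀ t, Xhat t = SE2mat (θhat t) (xhat t))
    (hPdef : ∀ i t, P i t = SE2mat (θ t) (p i t))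
    (hPhatdef : ∀ i t, Phat i t = SE2mat (θhat t) (phat i t))
    -- system dynamics: Ẋ = X Ω, Ṗᵢ = Pᵢ Ωᵢ
    (hX : ∀ t, HasDerivAt X (X t * ΩmatX (u t) (v t)) t)
    (hP : ∀ i t, HasDerivAt (P i) (P i t * ΩmatP (u t) (v t)) t)
    -- observer dynamics: X̂' = X̂ Ω + L_X(Ỹ) X̂, P̂ᵢ' = P̂ᵢ Ωᵢ + Lᵢ(Ỹ) P̂ᵢ
    (hXhat : ∀ t, HasDerivAt Xhat (Xhat t * ΩmatX (u t) (v t) + LX (Ytil t) * Xhat t) t)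
    (hPhat : ∀ i t, HasDerivAt (Phat i)
      (Phat i t * ΩmatP (u t) (v t) + Li i (Ytil t) * Phat i t) t)
    -- invariant state errors
    (ηx : ℝ → Matrix (Fin 3) (Fin 3) ℝ) (hηx : ∀ t, ηx t = Xhat t * (X t)⁻¹)
    (η : Fin N → ℝ → Matrix (Fin 3) (Fin 3) ℝ)
    (hη : ∀ i t, η i t = Phat i t * (P i t)⁻¹) :
    (∀ t, HasDerivAt ηx (LX (Ytil t) * ηx t) t) ∧
    (∀ i t, HasDerivAt (η i) (Li i (Ytil t) * η i t) t) ∧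
    (∀ t i, Ytil t i =
      ![((η i t - ηx t).mulVec ![0, 0, 1]) 0, ((η i t - ηx t).mulVec ![0, 0, 1]) 1]) := by
  have hXunit : ∀ s, IsUnit (X s) := fun s => hXdef s ▸ isUnit_SE2mat _ _
  have hPunit : ∀ i s, IsUnit (P i s) := fun i s => hPdef i s ▸ isUnit_SE2mat _ _
  refine ⟨fun t => ?_, fun i t => ?_, fun t i => ?_⟩
  · rw [funext hηx]
    exact hasDerivAt_mul_inv_of_left_invariant (hX t) (hXhat t) (hXunit t)
  · rw [funext (hη i)]
    exact hasDerivAt_mul_inv_of_left_invariant (hP i t) (hPhat i t) (hPunit i t)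
  · rw [hY, hzhat, hz, Rot_mulVec_sub_Rot_neg_mulVec, hη, hηx, hPhatdef, hPdef, hXhatdef, hXdef,
      SE2mat_mul_inv, SE2mat_mul_inv, SE2mat_sub_SE2mat_mulVec, mulVec_sub]
    ext k
    fin_cases k <;>
      simp only [Fin.zero_eta, Fin.mk_one, Pi.sub_apply, cons_val_zero, cons_val_one,
        cons_val_fin_one] <;> ring

/-- **Autonomy of the invariant error equation for SLAM in matrix form on SE(2)^{N+1}.**
For the left-invariant SLAM system `Ẋ = X Ω`, `Ṗᵢ = Pᵢ Ωᵢ` and the invariant observer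
`X̂' = X̂ Ω + L_X(Ỹ) X̂`, `P̂ᵢ' = P̂ᵢ Ωᵢ + Lᵢ(Ỹ) P̂ᵢ` with invariant output errors
`Ỹᵢ = R_{θ̂}(ẑᵢ − zᵢ)`, the invariant state errors `η_x = X̂ X⁻¹`, `ηᵢ = P̂ᵢ Pᵢ⁻¹` satisfy
`η_x' = L_X(Ỹ) η_x`, `ηᵢ' = Lᵢ(Ỹ) ηᵢ`, where each `Ỹᵢ` is given by the first two components
of `(ηᵢ − η_x) H` with `H = (0,0,1)ᵀ`: the error equation is autonomous, depending only on
`(η_x, η₁, …, η_N)` and not on the trajectory or the inputs `u`, `v`. -/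
theorem slam_matrix_error_equation_autonomous
    {N : ℕ} (u v : ℝ → ℝ) (hu : Continuous u) (hv : Continuous v)
    (LX : (Fin N → Fin 2 → ℝ) → Matrix (Fin 3) (Fin 3) ℝ)
    (Li : Fin N → (Fin N → Fin 2 → ℝ) → Matrix (Fin 3) (Fin 3) ℝ)
    (hLX : Continuous LX) (hLi : ∀ i, Continuous (Li i))
    (x xhat : ℝ → Fin 2 → ℝ) (θ θhat : ℝ → ℝ)
    (p phat : Fin N → ℝ → Fin 2 → ℝ)
    (z zhat : Fin N → ℝ → Fin 2 → ℝ)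
    (hz : ∀ i t, z i t = (Rot (-(θ t))).mulVec (p i t - x t))
    (hzhat : ∀ i t, zhat i t = (Rot (-(θhat t))).mulVec (phat i t - xhat t))
    (Ytil : ℝ → Fin N → Fin 2 → ℝ)
    (hY : ∀ t i, Ytil t i = (Rot (θhat t)).mulVec (zhat i t - z i t))
    (X Xhat : ℝ → Matrix (Fin 3) (Fin 3) ℝ)
    (P Phat : Fin N → ℝ → Matrix (Fin 3) (Fin 3) ℝ)
    (hXdef : ∀ t, X t = SE2mat (θ t) (x t))
    (hXhatdef : ∀ t, Xhat t = SE2mat (θhat t) (xhat t))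
    (hPdef : ∀ i t, P i t = SE2mat (θ t) (p i t))
    (hPhatdef : ∀ i t, Phat i t = SE2mat (θhat t) (phat i t))
    -- system dynamics: Ẋ = X Ω, Ṗᵢ = Pᵢ Ωᵢ
    (hX : ∀ t, HasDerivAt X (X t * ΩmatX (u t) (v t)) t)
    (hP : ∀ i t, HasDerivAt (P i) (P i t * ΩmatP (u t) (v t)) t)
    -- observer dynamics: X̂' = X̂ Ω + L_X(Ỹ) X̂, P̂ᵢ' = P̂ᵢ Ωᵢ + Lᵢ(Ỹ) P̂ᵢ
    (hXhat : ∀ t, HasDerivAt Xhat (Xhat t * ΩmatX (u t) (v t) + LX (Ytil t) * Xhat t) t)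
    (hPhat : ∀ i t, HasDerivAt (Phat i)
      (Phat i t * ΩmatP (u t) (v t) + Li i (Ytil t) * Phat i t) t)
    -- invariant state errors
    (ηx : ℝ → Matrix (Fin 3) (Fin 3) ℝ) (hηx : ∀ t, ηx t = Xhat t * (X t)⁻¹)
    (η : Fin N → ℝ → Matrix (Fin 3) (Fin 3) ℝ)
    (hη : ∀ i t, η i t = Phat i t * (P i t)⁻¹) :
    (∀ t, HasDerivAt ηx (LX (Ytil t) * ηx t) t) ∧
    (∀ i t, HasDerivAt (η i) (Li i (Ytil t) * η i t) t) ∧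
    (∀ t i, Ytil t i =
      ![((η i t - ηx t).mulVec ![0, 0, 1]) 0, ((η i t - ηx t).mulVec ![0, 0, 1]) 1]) :=
  slam_matrix_error_equation_autonomous_general u v LX Li x xhat θ θhat p phat z zhat hz hzhat Ytil
    hY X Xhat P Phat hXdef hXhatdef hPdef hPhatdef hX hP hXhat hPhat ηx hηx η hη
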